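/- arXiv:1411.4097 — 3 statements merged into one kernel-verified Lean document; each statement's English description precedes it below -/
import Mathlib

section
/- For the DRB game on the k-dimensional grid, there exists n0 ∈ ℕ (depending only on k and the granularity γ) such that for all n ≥ n0: for every node u, the strategy r_u = 0 is the unique best response of u to the uniform zero profile r_{-u} ≡ 0, i.e., π_u(0, r_{-u}≡0) > π_u(s', r_{-u}≡0) for every s' ∈ Σ with s' > 0. -/
open Finset

noncomputable section

namespace DRB

/-- Nodes of the `k`-dimensional grid (torus) with side length `n`. -/
abbrev Node (n k : ℕ) := Fin k → Fin n

/-- Grid (Manhattan) distance on the torus: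
`d_M(u,v) = Σ_i min(|u_i - v_i|, n - |u_i - v_i|)`. -/
def dM (n k : ℕ) (u v : Node n k) : ℕ :=
  ∑ i, min ((u i : ℤ) - (v i : ℤ)).natAbs (n - ((u i : ℤ) - (v i : ℤ)).natAbs)

/-- All nodes different from `u`. -/
def others (n k : ℕ) (u : Node n k) : Finset (Node n k) :=
  Finset.univ.filter (fun v => v ≠ u)

/-- Normalization constant `c(s) = Σ_{v ≠ u} d_M(u,v)^{-s}` for node `u`. -/
def cnorm (n k : ℕ) (u : Node n k) (s : ℝ) : ℝ :=
  ∑ v ∈ others n k u, (dM n k u v : ℝ) ^ (-s)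

/-- Long-range link probability `p_u(v, s) = d_M(u,v)^{-s} / c(s)`. -/
def linkProb (n k : ℕ) (u v : Node n k) (s : ℝ) : ℝ :=
  (dM n k u v : ℝ) ^ (-s) / cnorm n k u s

/-- Link distance `D(s) = Σ_{v ≠ u} p_u(v,s) · d_M(u,v)` of node `u`. -/
def linkDist (n k : ℕ) (u : Node n k) (s : ℝ) : ℝ :=
  ∑ v ∈ others n k u, linkProb n k u v s * (dM n k u v : ℝ)

/-- Reciprocity `P_u(r) = Σ_{v ≠ u} p_u(v, r_u) · p_v(u, r_v)`. -/
def recip (n k : ℕ) (r : Node n k → ℝ) (u : Node n k) : ℝ :=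
  ∑ v ∈ others n k u, linkProb n k u v (r u) * linkProb n k v u (r v)

/-- DRB payoff `π_u(r) = D(r_u) · P_u(r)`. -/
def payoff (n k : ℕ) (r : Node n k → ℝ) (u : Node n k) : ℝ :=
  linkDist n k u (r u) * recip n k r u

/-- Membership in the strategy set `Σ = {0, γ, 2γ, 3γ, ...}`. -/
def InSigma (γ s : ℝ) : Prop := ∃ m : ℕ, s = m * γ

/-- A valid strategy profile (every coordinate lies in `Σ`). -/
def ValidProfile (n k : ℕ) (γ : ℝ) (r : Node n k → ℝ) : Prop :=
  ∀ u, InSigma γ (r u)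

/-- Nash equilibrium of the DRB game with strategy set `Σ` of granularity `γ`. -/
def IsNash (n k : ℕ) (γ : ℝ) (r : Node n k → ℝ) : Prop :=
  ∀ u : Node n k, ∀ s : ℝ, InSigma γ s →
    payoff n k r u ≥ payoff n k (Function.update r u s) u

/-- Strict Nash equilibrium. -/
def IsStrictNash (n k : ℕ) (γ : ℝ) (r : Node n k → ℝ) : Prop :=
  ∀ u : Node n k, ∀ s : ℝ, InSigma γ s → s ≠ r u →
    payoff n k r u > payoff n k (Function.update r u s) u

/-- `t`-strong Nash equilibrium: no coalition of size ≤ `t` has a weakly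
improving joint deviation that strictly improves some member. -/
def IsTStrongNash (n k : ℕ) (γ : ℝ) (t : ℕ) (r : Node n k → ℝ) : Prop :=
  ¬ ∃ (C : Finset (Node n k)) (s : Node n k → ℝ),
      C.Nonempty ∧ C.card ≤ t ∧ (∀ u ∈ C, InSigma γ (s u)) ∧
      (∀ u ∈ C,
        payoff n k (fun v => if v ∈ C then s v else r v) u ≥ payoff n k r u) ∧
      (∃ u ∈ C,
        payoff n k (fun v => if v ∈ C then s v else r v) u > payoff n k r u)

/-- Strong Nash equilibrium: coalitions of any size. -/
def IsStrongNash (n k : ℕ) (γ : ℝ) (r : Node n k → ℝ) : Prop :=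
  ¬ ∃ (C : Finset (Node n k)) (s : Node n k → ℝ),
      C.Nonempty ∧ (∀ u ∈ C, InSigma γ (s u)) ∧
      (∀ u ∈ C,
        payoff n k (fun v => if v ∈ C then s v else r v) u ≥ payoff n k r u) ∧
      (∃ u ∈ C,
        payoff n k (fun v => if v ∈ C then s v else r v) u > payoff n k r u)

/-- `b_u(j)`: the number of nodes at grid distance exactly `j` from `u`. -/
def countAt (n k : ℕ) (u : Node n k) (j : ℕ) : ℕ :=
  (Finset.univ.filter (fun v => v ≠ u ∧ dM n k u v = j)).card

/-- One asynchronous best-response step: a single node switches to a best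
response to the current profile, all other strategies unchanged. -/
def BRStep (n k : ℕ) (γ : ℝ) (r r' : Node n k → ℝ) : Prop :=
  ∃ (u : Node n k) (s : ℝ), InSigma γ s ∧
    (∀ t : ℝ, InSigma γ t →
      payoff n k (Function.update r u s) u ≥ payoff n k (Function.update r u t) u) ∧
    r' = Function.update r u s

/-- One synchronous best-response step: every node simultaneously switches
to a best response to the current profile `r`. -/
def SyncStep (n k : ℕ) (γ : ℝ) (r r' : Node n k → ℝ) : Prop :=
  ∀ u : Node n k, InSigma γ (r' u) ∧
    ∀ t : ℝ, InSigma γ t →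
      payoff n k (Function.update r u (r' u)) u ≥
        payoff n k (Function.update r u t) u

end DRB


/-!
When every other node plays `0`, each `v ≠ u` links back to `u` with probability `1 / N`, where
`N` is the number of nodes other than `u`; so the reciprocity of `u` is `1 / N` whatever `u`
plays, and its payoff is `D(s) / N`. Now `D(s) = Σ d · d^(-s) / Σ d^(-s)` pairs the distances `d`
with the oppositely ordered weights `d^(-s)`, so Chebyshev's sum inequality gives
`D(s) < Σ d / N = D(0)` for `s > 0` as soon as two nodes lie at different distances from `u`;
on a torus of side `n ≥ 4` the distances `1` and `2` both occur.
-/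

theorem Finset.card_mul_sum_mul_lt_sum_mul_sum {ι R : Type*} [CommRing R] [LinearOrder R]
    [IsStrictOrderedRing R] {S : Finset ι} {a b : ι → R}
    (hab : ∀ v ∈ S, ∀ w ∈ S, (a v - a w) * (b v - b w) ≤ 0)
    {v₀ w₀ : ι} (hv₀ : v₀ ∈ S) (hw₀ : w₀ ∈ S) (hlt : (a v₀ - a w₀) * (b v₀ - b w₀) < 0) :
    #S * ∑ v ∈ S, a v * b v < (∑ v ∈ S, a v) * ∑ v ∈ S, b v := by
  have hneg : ∑ p ∈ S ×ˢ S, (a p.1 - a p.2) * (b p.1 - b p.2) < 0 :=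
    Finset.sum_neg' (fun p hp => hab _ (mem_product.mp hp).1 _ (mem_product.mp hp).2)
      ⟨(v₀, w₀), mem_product.mpr ⟨hv₀, hw₀⟩, hlt⟩
  have hexpand : ∑ p ∈ S ×ˢ S, (a p.1 - a p.2) * (b p.1 - b p.2) =
      2 * (#S * ∑ v ∈ S, a v * b v) - 2 * ((∑ v ∈ S, a v) * ∑ v ∈ S, b v) := by
    simp only [sum_product, mul_sub, sub_mul, sum_sub_distrib, sum_const, nsmul_eq_mul,
      ← mul_sum, ← sum_mul]
    ring
  linarith

theorem Real.sub_mul_rpow_neg_sub_rpow_neg_neg {x y s : ℝ} (hx : 0 < x) (hy : 0 < y)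
    (hxy : x ≠ y) (hs : 0 < s) : (x - y) * (x ^ (-s) - y ^ (-s)) < 0 := by
  rcases hxy.lt_or_gt with h | h
  · exact mul_neg_of_neg_of_pos (by linarith)
      (sub_pos.mpr (Real.rpow_lt_rpow_of_neg hx h (neg_neg_of_pos hs)))
  · exact mul_neg_of_pos_of_neg (by linarith)
      (sub_neg.mpr (Real.rpow_lt_rpow_of_neg hy h (neg_neg_of_pos hs)))

namespace DRB

variable {n k : ℕ}

@[simp]
theorem mem_others {u v : Node n k} : v ∈ others n k u ↔ v ≠ u := by
  simp [others]

theorem card_others (u : Node n k) : #(others n k u) = n ^ k - 1 := by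
  rw [others, filter_ne', card_erase_of_mem (mem_univ u), card_univ, Fintype.card_fun,
    Fintype.card_fin, Fintype.card_fin]

theorem dM_pos {u v : Node n k} (h : v ≠ u) : 0 < dM n k u v := by
  obtain ⟨i, hi⟩ := Function.ne_iff.mp h
  have hvi : (v i : ℕ) ≠ u i := Fin.val_ne_of_ne hi
  have hterm : 0 < min ((u i : ℤ) - (v i : ℤ)).natAbs (n - ((u i : ℤ) - (v i : ℤ)).natAbs) := by
    have := (u i).isLt
    have := (v i).isLt
    omega
  exact sum_pos' (fun _ _ => Nat.zero_le _) ⟨i, mem_univ i, hterm⟩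

theorem dM_update_self (u : Node n k) (i : Fin k) (x : Fin n) :
    dM n k u (Function.update u i x) =
      min ((u i : ℤ) - (x : ℤ)).natAbs (n - ((u i : ℤ) - (x : ℤ)).natAbs) := by
  rw [dM, sum_eq_single i]
  · rw [Function.update_self]
  · intro j _ hj
    simp [Function.update_of_ne hj]
  · exact fun h => absurd (mem_univ i) h

theorem exists_dM_eq (hk : 0 < k) {c : ℕ} (hc : 2 * c ≤ n) (u : Node n k) :
    ∃ v, dM n k u v = c := by
  let i : Fin k := ⟨0, hk⟩
  have hu := (u i).isLt
  let x : Fin n := ⟨((u i : ℕ) + c) % n, Nat.mod_lt _ (by omega)⟩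
  refine ⟨Function.update u i x, ?_⟩
  rw [dM_update_self]
  have hx : (x : ℕ) = ((u i : ℕ) + c) % n := rfl
  rcases Nat.lt_or_ge ((u i : ℕ) + c) n with h | h
  · rw [Nat.mod_eq_of_lt h] at hx
    omega
  · rw [Nat.mod_eq_sub_mod h, Nat.mod_eq_of_lt (by omega)] at hx
    omega

theorem cnorm_pos {u : Node n k} (hne : (others n k u).Nonempty) (s : ℝ) :
    0 < cnorm n k u s :=
  sum_pos (fun _ hv => Real.rpow_pos_of_pos (Nat.cast_pos.mpr (dM_pos (mem_others.mp hv))) _) hne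

theorem cnorm_zero (u : Node n k) : cnorm n k u 0 = #(others n k u) := by
  simp [cnorm]

theorem sum_linkProb {u : Node n k} (hne : (others n k u).Nonempty) (s : ℝ) :
    ∑ v ∈ others n k u, linkProb n k u v s = 1 := by
  simp only [linkProb, ← sum_div]
  exact div_self (cnorm_pos hne s).ne'

theorem linkProb_zero (u v : Node n k) : linkProb n k u v 0 = 1 / #(others n k u) := by
  rw [linkProb, neg_zero, Real.rpow_zero, cnorm_zero]

theorem linkDist_eq (u : Node n k) (s : ℝ) :
    linkDist n k u s =
      (∑ v ∈ others n k u, (dM n k u v : ℝ) ^ (-s) * dM n k u v) / cnorm n k u s := by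
  simp only [linkDist, linkProb, sum_div, div_mul_eq_mul_div]

theorem recip_update_zero {u : Node n k} (hne : (others n k u).Nonempty) (s : ℝ) :
    recip n k (Function.update (fun _ => 0) u s) u = 1 / #(others n k u) := by
  have hterm : ∀ v ∈ others n k u,
      linkProb n k u v (Function.update (fun _ => (0 : ℝ)) u s u) *
        linkProb n k v u (Function.update (fun _ => (0 : ℝ)) u s v) =
      linkProb n k u v s * (1 / #(others n k u)) := by
    intro v hv
    rw [Function.update_self, Function.update_of_ne (mem_others.mp hv), linkProb_zero,
      card_others, card_others]
  rw [recip, sum_congr rfl hterm, ← sum_mul, sum_linkProb hne, one_mul]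

theorem payoff_update_zero {u : Node n k} (hne : (others n k u).Nonempty) (s : ℝ) :
    payoff n k (Function.update (fun _ => 0) u s) u = linkDist n k u s / #(others n k u) := by
  rw [payoff, recip_update_zero hne, Function.update_self, mul_one_div]

theorem linkDist_lt_linkDist_zero {u v w : Node n k} (hv : v ≠ u) (hw : w ≠ u)
    (hvw : dM n k u v ≠ dM n k u w) {s : ℝ} (hs : 0 < s) :
    linkDist n k u s < linkDist n k u 0 := by
  have hne : (others n k u).Nonempty := ⟨v, mem_others.mpr hv⟩
  have hpair : ∀ x ∈ others n k u, ∀ y ∈ others n k u,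
      ((dM n k u x : ℝ) - dM n k u y) *
        ((dM n k u x : ℝ) ^ (-s) - (dM n k u y : ℝ) ^ (-s)) ≤ 0 := by
    intro x hx y hy
    rcases eq_or_ne (dM n k u x) (dM n k u y) with h | h
    · simp [h]
    · exact (Real.sub_mul_rpow_neg_sub_rpow_neg_neg
        (Nat.cast_pos.mpr (dM_pos (mem_others.mp hx)))
        (Nat.cast_pos.mpr (dM_pos (mem_others.mp hy)))
        (Nat.cast_injective.ne h) hs).le
  have hcheb := card_mul_sum_mul_lt_sum_mul_sum hpair (mem_others.mpr hv) (mem_others.mpr hw)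
    (Real.sub_mul_rpow_neg_sub_rpow_neg_neg (Nat.cast_pos.mpr (dM_pos hv))
      (Nat.cast_pos.mpr (dM_pos hw)) (Nat.cast_injective.ne hvw) hs)
  have hcard : (0 : ℝ) < #(others n k u) := Nat.cast_pos.mpr (card_pos.mpr hne)
  rw [linkDist_eq, linkDist_eq, cnorm_zero, div_lt_div_iff₀ (cnorm_pos hne s) hcard]
  simp only [neg_zero, Real.rpow_zero, one_mul]
  rw [cnorm]
  simp only [mul_comm ((dM n k u _ : ℝ) ^ (-s))] at hcheb ⊢
  linarith

end DRB

theorem zero_unique_best_response_to_uniform_zero_general (k g : ℕ) (hk : 1 ≤ k) :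
    ∃ n0 : ℕ, ∀ n : ℕ, n0 ≤ n →
      ∀ u : DRB.Node n k,
        ∀ s' : ℝ, DRB.InSigma (g : ℝ)⁻¹ s' → 0 < s' →
          DRB.payoff n k (Function.update (fun _ => (0 : ℝ)) u (0 : ℝ)) u >
            DRB.payoff n k (Function.update (fun _ => (0 : ℝ)) u s') u := by
  refine ⟨4, fun n hn u s' _ hs' => ?_⟩
  obtain ⟨v, hv⟩ := DRB.exists_dM_eq hk (c := 1) (by omega) u
  obtain ⟨w, hw⟩ := DRB.exists_dM_eq hk (c := 2) (by omega) u
  have hvu : v ≠ u := fun h => by simp [h, DRB.dM] at hv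
  have hwu : w ≠ u := fun h => by simp [h, DRB.dM] at hw
  have hne : (DRB.others n k u).Nonempty := ⟨v, DRB.mem_others.mpr hvu⟩
  rw [DRB.payoff_update_zero hne, DRB.payoff_update_zero hne]
  exact div_lt_div_of_pos_right
    (DRB.linkDist_lt_linkDist_zero hvu hwu (by omega) hs') (Nat.cast_pos.mpr (card_pos.mpr hne))

/-- For the DRB game on the `k`-dimensional grid there exists `n0`
(depending only on `k` and `γ = 1/g`) such that for all `n ≥ n0`, for every node
`u`, the strategy `0` is the unique best response of `u` to the uniform zero
profile `r_{-u} ≡ 0`. -/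
theorem zero_unique_best_response_to_uniform_zero (k g : ℕ) (hk : 1 ≤ k) (hg : 2 ≤ g) :
    ∃ n0 : ℕ, ∀ n : ℕ, n0 ≤ n →
      ∀ u : DRB.Node n k,
        ∀ s' : ℝ, DRB.InSigma (g : ℝ)⁻¹ s' → 0 < s' →
          DRB.payoff n k (Function.update (fun _ => (0 : ℝ)) u (0 : ℝ)) u >
            DRB.payoff n k (Function.update (fun _ => (0 : ℝ)) u s') u :=
  zero_unique_best_response_to_uniform_zero_general k g hk
end
end

section
/- For the DRB game on the k-dimensional grid, suppose ξ_k^− and ξ_k^+ are positive constants depending only on k such that ξ_k^− j^{k−1} ≤ b_u(j) ≤ ξ_k^+ j^{k−1} for all 1 ≤ j ≤ ⌊n/2⌋ and 1 ≤ b_u(j) ≤ ξ_k^+ j^{k−1} for ⌊n/2⌋ < j ≤ n_D, where b_u(j) is the number of nodes at grid distance exactly j from u. Then for sufficiently large n, in the navigable profile r ≡ k every node u satisfies ((ξ_k^−)^2/(2(ξ_k^+)^3)) · n/(ln(2kn))^3 ≤ π_u(r ≡ k) ≤ (16(ξ_k^+)^2/(ξ_k^−)^3) · n/(ln n)^3.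 -/
/-!
For the profile `r ≡ k` every normalization constant is `c(k) = Σ_j b(j) j^(-k)`, which the
counting bounds squeeze, uniformly in the node, between `ξ⁻ log ⌊n/2⌋` and `ξ⁺ log (2kn)`
(harmonic sums). Since `p_u(v) p_v(u) = d(u,v)^(-2k) / (c_u c_v)`, the payoff
`π_u = (A / c_u) P_u` lies between `A B / c_max³` and `A B / c_min³`, where
`A = Σ_v d(u,v)^(1-k)` and `B = Σ_v d(u,v)^(-2k)`.

The shells `j ≤ ⌊n/2⌋` contribute between `ξ⁻` and `ξ⁺` each to `A`. The `(k-1)⌊n/2⌋` farther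
shells contribute at most `6` each, because a sphere of radius `j > 4(k-1)²` in the torus has at
most `2^k C(j+k-1, k-1) ≤ 6 j^(k-1)` points; together with `k ≤ ξ⁺` (the counting bound on the
torus of side `2`) this gives `A ≤ 7 ξ⁺ ⌊n/2⌋`. Also `ξ⁻ (1 + 2^(-(k+1))) ≤ B ≤ 2 ξ⁺`, from the
shells `1, 2` and from `Σ 1/j² ≤ 2`. For large `n`, `log ⌊n/2⌋ ≥ (4/5) log n` turns these
estimates into the stated constants.
-/

open Finset

noncomputable section

namespace DRB

open scoped Nat

lemma pow_sub_one_mul_inv_pow {x : ℝ} (hx : x ≠ 0) {k : ℕ} (hk : 1 ≤ k) :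
    x ^ (k - 1) * (x ^ k)⁻¹ = x⁻¹ := by
  rw [pow_sub₀ x hx hk, pow_one]; field_simp

lemma pow_sub_one_mul_inv_pow_mul_self {x : ℝ} (hx : x ≠ 0) {k : ℕ} (hk : 1 ≤ k) :
    x ^ (k - 1) * ((x ^ k)⁻¹ * x) = 1 := by
  rw [← mul_assoc, pow_sub_one_mul_inv_pow hx hk, inv_mul_cancel₀ hx]

lemma two_pow_le_four_mul_factorial (k : ℕ) : 2 ^ k ≤ 4 * (k - 1)! := by
  rcases k with _ | _ | k
  · norm_num
  · norm_num
  · have := Nat.factorial_mul_pow_le_factorial (m := 1) (n := k)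
    simp only [Nat.factorial_one, one_mul, add_comm 1 k] at this
    norm_num [pow_add] at this ⊢
    omega

lemma add_pow_le_exp_mul_pow {x : ℝ} (hx : 0 < x) (c : ℕ) :
    (x + c) ^ c ≤ Real.exp (c ^ 2 / x) * x ^ c := by
  calc (x + c) ^ c = (1 + c / x) ^ c * x ^ c := by rw [← mul_pow]; field_simp
    _ ≤ Real.exp (c / x) ^ c * x ^ c := by
        gcongr
        linarith [Real.add_one_le_exp (c / x)]
    _ = Real.exp (c ^ 2 / x) * x ^ c := by rw [← Real.exp_nat_mul]; ring_nf

lemma log_le_sum_Icc_inv (m : ℕ) : Real.log m ≤ ∑ j ∈ Icc 1 m, (j : ℝ)⁻¹ := by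
  have h := log_add_one_le_harmonic m
  simp only [harmonic_eq_sum_Icc, Rat.cast_sum, Rat.cast_inv, Rat.cast_natCast] at h
  rcases m.eq_zero_or_pos with rfl | hm
  · simp
  · exact (Real.log_le_log (by exact_mod_cast hm) (by push_cast; linarith)).trans h

lemma sum_Icc_inv_le_one_add_log (m : ℕ) :
    ∑ j ∈ Icc 1 m, (j : ℝ)⁻¹ ≤ 1 + Real.log m := by
  simpa only [harmonic_eq_sum_Icc, Rat.cast_sum, Rat.cast_inv, Rat.cast_natCast] using
    harmonic_le_one_add_log m

lemma sum_Icc_inv_sq_le_two (m : ℕ) : ∑ j ∈ Icc 1 m, ((j : ℝ) ^ 2)⁻¹ ≤ 2 := by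
  have h := sum_Ioo_inv_sq_le (α := ℝ) 0 (m + 1)
  rwa [Ioo_add_one_right_eq_Ioc, ← Icc_add_one_left_eq_Ioc, zero_add, Nat.cast_zero, zero_add,
    div_one] at h

lemma four_fifths_log_le_log_half {n : ℕ} (hn : 243 ≤ n) :
    4 / 5 * Real.log n ≤ Real.log (n / 2 : ℕ) := by
  have hm : (0 : ℝ) < (n / 2 : ℕ) := by exact_mod_cast (show 0 < n / 2 by omega)
  have h3 : Real.log n ≤ Real.log 3 + Real.log (n / 2 : ℕ) := by
    rw [← Real.log_mul (by norm_num) hm.ne']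
    exact Real.log_le_log (by positivity) (by exact_mod_cast (show n ≤ 3 * (n / 2) by omega))
  have h243 : 5 * Real.log 3 ≤ Real.log n := by
    calc 5 * Real.log 3 = Real.log (3 ^ 5) := by rw [Real.log_pow]; norm_num
      _ ≤ Real.log n := Real.log_le_log (by norm_num) (by norm_num; exact_mod_cast hn)
  linarith

lemma div_log_half_cube_le {n : ℕ} (hn : 243 ≤ n) :
    14 * (n / 2 : ℕ) / Real.log (n / 2 : ℕ) ^ 3 ≤ 16 * n / Real.log n ^ 3 := by
  have hlog := four_fifths_log_le_log_half hn
  have hLn : 0 < Real.log n := Real.log_pos (by exact_mod_cast (show 1 < n by omega))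
  have hm : 14 * ((n / 2 : ℕ) : ℝ) ≤ 7 * n := by
    have : ((2 * (n / 2) : ℕ) : ℝ) ≤ n := by exact_mod_cast Nat.mul_div_le n 2
    push_cast at this; linarith
  calc 14 * (n / 2 : ℕ) / Real.log (n / 2 : ℕ) ^ 3 ≤ 7 * n / (4 / 5 * Real.log n) ^ 3 := by
        gcongr
    _ = 875 / 64 * (n / Real.log n ^ 3) := by ring
    _ ≤ 16 * n / Real.log n ^ 3 := by
        rw [mul_div_assoc]; gcongr; norm_num

lemma half_le_mul_one_add_inv_two_pow {n k : ℕ} (hn : 2 ^ (k + 1) < n) :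
    (n : ℝ) / 2 ≤ (n / 2 : ℕ) * (1 + (2 ^ (k + 1) : ℝ)⁻¹) := by
  have hodd : (n : ℝ) ≤ 2 * (n / 2 : ℕ) + 1 := by
    exact_mod_cast (show n ≤ 2 * (n / 2) + 1 by omega)
  have hpow : (2 ^ (k + 1) : ℝ) ≤ 2 * (n / 2 : ℕ) := by
    exact_mod_cast (show 2 ^ (k + 1) ≤ 2 * (n / 2) by omega)
  have hinv : 1 / 2 ≤ ((n / 2 : ℕ) : ℝ) * (2 ^ (k + 1) : ℝ)⁻¹ := by
    rw [← div_eq_mul_inv, le_div_iff₀ (by positivity)]; linarith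
  linarith

section Grid

variable {n k : ℕ}

def cycDist (n : ℕ) (a b : Fin n) : ℕ :=
  min ((a : ℤ) - (b : ℤ)).natAbs (n - ((a : ℤ) - (b : ℤ)).natAbs)

/-- Whether `b` is reached from `a` by walking forward (mod `n`) along the cycle. -/
def IsCycForward (n : ℕ) (a b : Fin n) : Prop :=
  (b : ℤ) = a + cycDist n a b ∨ (b : ℤ) = a + cycDist n a b - n

instance (a b : Fin n) : Decidable (IsCycForward n a b) := by
  unfold IsCycForward; infer_instance

lemma dM_eq_sum_cycDist (u v : Node n k) : dM n k u v = ∑ i, cycDist n (u i) (v i) := rfl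

lemma cycDist_le_half (a b : Fin n) : cycDist n a b ≤ n / 2 := by
  have := a.isLt; have := b.isLt
  unfold cycDist; omega

lemma one_le_cycDist {a b : Fin n} (h : a ≠ b) : 1 ≤ cycDist n a b := by
  have := a.isLt; have := b.isLt; have := Fin.val_ne_of_ne h
  unfold cycDist; omega

lemma eq_of_cycDist_eq {a b c : Fin n} (hd : cycDist n a b = cycDist n a c)
    (hf : IsCycForward n a b ↔ IsCycForward n a c) : b = c := by
  have := a.isLt; have := b.isLt; have := c.isLt
  unfold IsCycForward at hf
  unfold cycDist at hd hf
  ext; omega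

lemma dM_comm (u v : Node n k) : dM n k u v = dM n k v u := by
  simp only [dM, ← Int.natAbs_neg (↑(v _) - ↑(u _)), neg_sub]

lemma one_le_dM {u v : Node n k} (h : v ≠ u) : 1 ≤ dM n k u v := by
  obtain ⟨i, hi⟩ := Function.ne_iff.mp h
  exact (one_le_cycDist (Ne.symm hi)).trans
    (single_le_sum (f := fun i => cycDist n (u i) (v i)) (fun _ _ => Nat.zero_le _) (mem_univ i))

lemma dM_le (u v : Node n k) : dM n k u v ≤ k * (n / 2) := by
  rw [dM_eq_sum_cycDist]
  simpa using sum_le_sum fun i (_ : i ∈ univ) => cycDist_le_half (u i) (v i)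

lemma card_antidiagonalTuple (k j : ℕ) :
    (Finset.Nat.antidiagonalTuple k j).card = (k + j - 1).choose j := by
  rw [← Fintype.card_coe, ← Fintype.card_fin k, ← Sym.card_sym_eq_choose, Fintype.card_fin]
  exact Fintype.card_congr ((Sym.equivNatSumOfFintype (Fin k) j).trans
    (Equiv.subtypeEquivRight fun _ => Finset.Nat.mem_antidiagonalTuple.symm)).symm

/-- A node at distance `j` from `u` is determined by its coordinatewise distances to `u`
(a weak composition of `j` into `k` parts) and by the direction taken in each coordinate. -/
lemma countAt_le_two_pow_mul_choose (u : Node n k) (j : ℕ) :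
    countAt n k u j ≤ 2 ^ k * (k + j - 1).choose j := by
  let code : Node n k → (Fin k → ℕ) × (Fin k → Bool) := fun v =>
    (fun i => cycDist n (u i) (v i), fun i => decide (IsCycForward n (u i) (v i)))
  calc countAt n k u j
      ≤ (Finset.Nat.antidiagonalTuple k j ×ˢ (univ : Finset (Fin k → Bool))).card := by
        refine card_le_card_of_injOn code (fun v hv => ?_) (fun v _ w _ hvw => ?_)
        · simp only [coe_filter, mem_univ, true_and, Set.mem_ofPred_eq] at hv
          simpa [code, Finset.Nat.mem_antidiagonalTuple, ← dM_eq_sum_cycDist] using hv.2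
        · simp only [code, Prod.mk.injEq, funext_iff, decide_eq_decide] at hvw
          exact funext fun i => eq_of_cycDist_eq (hvw.1 i) (hvw.2 i)
    _ = 2 ^ k * (k + j - 1).choose j := by
        rw [card_product, card_antidiagonalTuple, card_univ, Fintype.card_fun, Fintype.card_bool,
          Fintype.card_fin, mul_comm]

lemma countAt_le_six_mul_pow (u : Node n k) {j : ℕ} (hk : 1 ≤ k) (hj : 4 * (k - 1) ^ 2 < j) :
    (countAt n k u j : ℝ) ≤ 6 * (j : ℝ) ^ (k - 1) := by
  obtain ⟨c, rfl⟩ := Nat.exists_eq_add_of_le' hk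
  simp only [Nat.add_sub_cancel] at hj ⊢
  have hj0 : (0 : ℝ) < j := by exact_mod_cast (show 0 < j by omega)
  have hx : (c : ℝ) ^ 2 / j < 1 / 4 := by
    rw [div_lt_iff₀ hj0]
    have : ((4 * c ^ 2 : ℕ) : ℝ) < j := by exact_mod_cast hj
    push_cast at this; linarith
  have hexp : Real.exp ((c : ℝ) ^ 2 / j) ≤ 4 / 3 :=
    (Real.exp_bound_div_one_sub_of_interval (by positivity) (by linarith)).trans
      (by rw [div_le_div_iff₀ (by linarith) (by norm_num)]; linarith)
  have hchoose : ((c + 1 + j - 1).choose j : ℝ) ≤ ((j : ℝ) + c) ^ c / c ! := by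
    rw [show c + 1 + j - 1 = j + c by omega, Nat.choose_symm_add]
    exact_mod_cast Nat.choose_le_pow_div c (j + c)
  have hfact : (2 : ℝ) ^ (c + 1) ≤ 4 * c ! := by
    exact_mod_cast two_pow_le_four_mul_factorial (c + 1)
  calc (countAt n (c + 1) u j : ℝ) ≤ 2 ^ (c + 1) * ((c + 1 + j - 1).choose j : ℝ) := by
        exact_mod_cast countAt_le_two_pow_mul_choose u j
    _ ≤ 4 * c ! * (((j : ℝ) + c) ^ c / c !) := by gcongr
    _ = 4 * ((j : ℝ) + c) ^ c := by field_simp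
    _ ≤ 4 * (Real.exp ((c : ℝ) ^ 2 / j) * (j : ℝ) ^ c) := by
        gcongr; exact add_pow_le_exp_mul_pow hj0 c
    _ ≤ 4 * (4 / 3 * (j : ℝ) ^ c) := by gcongr
    _ ≤ 6 * (j : ℝ) ^ c := by nlinarith [pow_pos hj0 c]

lemma k_le_countAt_two_one (u : Node 2 k) : k ≤ countAt 2 k u 1 := by
  have hne : ∀ a : Fin 2, a + 1 ≠ a := by decide
  have hcyc : ∀ a : Fin 2, cycDist 2 a (a + 1) = 1 := by decide
  calc k = (univ : Finset (Fin k)).card := by simp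
    _ ≤ countAt 2 k u 1 := by
      refine card_le_card_of_injOn (fun i => Function.update u i (u i + 1)) (fun i _ => ?_)
        (fun i _ i' _ h => ?_)
      · simp only [coe_filter, mem_univ, true_and, Set.mem_ofPred_eq]
        refine ⟨fun h => hne (u i) (by simpa using congrFun h i), ?_⟩
        rw [dM_eq_sum_cycDist, sum_eq_single i (fun t _ ht => by simp [ht, cycDist]) (by simp)]
        simpa using hcyc (u i)
      · by_contra hii
        exact hne (u i) (by simpa [Function.update_of_ne hii] using congrFun h i)

lemma sum_others_eq_sum_countAt (u : Node n k) (f : ℕ → ℝ) :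
    ∑ v ∈ others n k u, f (dM n k u v) =
      ∑ j ∈ Icc 1 (k * (n / 2)), (countAt n k u j : ℝ) * f j := by
  have hmaps : ∀ v ∈ others n k u, dM n k u v ∈ Icc 1 (k * (n / 2)) := fun v hv =>
    mem_Icc.mpr ⟨one_le_dM (mem_filter.mp hv).2, dM_le u v⟩
  rw [← sum_fiberwise_of_maps_to hmaps]
  refine sum_congr rfl fun j _ => ?_
  rw [sum_congr rfl fun v hv => congrArg f (mem_filter.mp hv).2, sum_const, nsmul_eq_mul]
  congr 3
  ext v
  simp [others]

end Grid

section ConstantProfile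

variable {n k : ℕ}

def linkDistNum (n k : ℕ) (u : Node n k) (s : ℝ) : ℝ :=
  ∑ v ∈ others n k u, (dM n k u v : ℝ) ^ (-s) * dM n k u v

def recipNum (n k : ℕ) (u : Node n k) (s : ℝ) : ℝ :=
  ∑ v ∈ others n k u, ((dM n k u v : ℝ) ^ (-s)) ^ 2

lemma linkDistNum_nonneg (u : Node n k) (s : ℝ) : 0 ≤ linkDistNum n k u s :=
  sum_nonneg fun _ _ => by positivity

lemma recipNum_nonneg (u : Node n k) (s : ℝ) : 0 ≤ recipNum n k u s :=
  sum_nonneg fun _ _ => by positivity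

lemma linkDist_eq_div (u : Node n k) (s : ℝ) :
    linkDist n k u s = linkDistNum n k u s / cnorm n k u s := by
  simp only [linkDist, linkDistNum, linkProb, sum_div, div_mul_eq_mul_div]

lemma linkProb_mul_linkProb (u v : Node n k) (s : ℝ) :
    linkProb n k u v s * linkProb n k v u s =
      ((dM n k u v : ℝ) ^ (-s)) ^ 2 / (cnorm n k u s * cnorm n k v s) := by
  rw [linkProb, linkProb, dM_comm v u, div_mul_div_comm, sq]

lemma recip_const_le {s c : ℝ} (hc : 0 < c) (h : ∀ w, c ≤ cnorm n k w s) (u : Node n k) :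
    recip n k (fun _ => s) u ≤ recipNum n k u s / c ^ 2 := by
  rw [recip, recipNum, sum_div]
  refine sum_le_sum fun v _ => ?_
  rw [linkProb_mul_linkProb, sq c]
  exact div_le_div_of_nonneg_left (sq_nonneg _) (mul_pos hc hc)
    (mul_le_mul (h u) (h v) hc.le (hc.le.trans (h u)))

lemma le_recip_const {s C : ℝ} (h0 : ∀ w, 0 < cnorm n k w s) (h : ∀ w, cnorm n k w s ≤ C)
    (u : Node n k) : recipNum n k u s / C ^ 2 ≤ recip n k (fun _ => s) u := by
  rw [recip, recipNum, sum_div]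
  refine sum_le_sum fun v _ => ?_
  rw [linkProb_mul_linkProb, sq C]
  exact div_le_div_of_nonneg_left (sq_nonneg _) (mul_pos (h0 u) (h0 v))
    (mul_le_mul (h u) (h v) (h0 v).le ((h0 u).le.trans (h u)))

lemma payoff_const_le {s c : ℝ} (hc : 0 < c) (h : ∀ w, c ≤ cnorm n k w s) (u : Node n k) :
    payoff n k (fun _ => s) u ≤ linkDistNum n k u s * recipNum n k u s / c ^ 3 := by
  have hc' : ∀ w, 0 < cnorm n k w s := fun w => hc.trans_le (h w)
  have hrecip : 0 ≤ recip n k (fun _ => s) u := sum_nonneg fun v _ => by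
    rw [linkProb_mul_linkProb]; exact div_nonneg (sq_nonneg _) (mul_pos (hc' u) (hc' v)).le
  calc payoff n k (fun _ => s) u
      = linkDistNum n k u s / cnorm n k u s * recip n k (fun _ => s) u := by
        rw [payoff, linkDist_eq_div]
    _ ≤ linkDistNum n k u s / c * (recipNum n k u s / c ^ 2) := by
        have := linkDistNum_nonneg u s
        gcongr
        exacts [h u, recip_const_le hc h u]
    _ = linkDistNum n k u s * recipNum n k u s / c ^ 3 := by ring

lemma le_payoff_const {s C : ℝ} (h0 : ∀ w, 0 < cnorm n k w s) (h : ∀ w, cnorm n k w s ≤ C)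
    (u : Node n k) :
    linkDistNum n k u s * recipNum n k u s / C ^ 3 ≤ payoff n k (fun _ => s) u := by
  have hC : 0 < C := (h0 u).trans_le (h u)
  calc linkDistNum n k u s * recipNum n k u s / C ^ 3
      = linkDistNum n k u s / C * (recipNum n k u s / C ^ 2) := by ring
    _ ≤ linkDistNum n k u s / cnorm n k u s * recip n k (fun _ => s) u := by
        have := linkDistNum_nonneg u s
        have := recipNum_nonneg u s
        have := h0 u
        gcongr
        exacts [h u, le_recip_const h0 h u]
    _ = payoff n k (fun _ => s) u := by rw [payoff, linkDist_eq_div]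

end ConstantProfile

def CountLowerBound (n k : ℕ) (ξ : ℝ) (u : Node n k) : Prop :=
  ∀ j, 1 ≤ j → j ≤ n / 2 → ξ * (j : ℝ) ^ (k - 1) ≤ countAt n k u j

def CountUpperBound (n k : ℕ) (ξ : ℝ) (u : Node n k) : Prop :=
  ∀ j, 1 ≤ j → j ≤ k * (n / 2) → (countAt n k u j : ℝ) ≤ ξ * (j : ℝ) ^ (k - 1)

section Navigable

variable {n k : ℕ} {ξm ξp : ℝ} {u : Node n k}

lemma cnorm_natCast_eq (u : Node n k) :
    cnorm n k u k =
      ∑ j ∈ Icc 1 (k * (n / 2)), (countAt n k u j : ℝ) * ((j : ℝ) ^ k)⁻¹ := by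
  rw [cnorm, ← sum_others_eq_sum_countAt u fun j => ((j : ℝ) ^ k)⁻¹]
  simp only [Real.rpow_neg_natCast, zpow_neg, zpow_natCast]

lemma linkDistNum_natCast_eq (u : Node n k) :
    linkDistNum n k u k =
      ∑ j ∈ Icc 1 (k * (n / 2)), (countAt n k u j : ℝ) * (((j : ℝ) ^ k)⁻¹ * j) := by
  rw [linkDistNum, ← sum_others_eq_sum_countAt u fun j => ((j : ℝ) ^ k)⁻¹ * j]
  simp only [Real.rpow_neg_natCast, zpow_neg, zpow_natCast]

lemma recipNum_natCast_eq (u : Node n k) :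
    recipNum n k u k =
      ∑ j ∈ Icc 1 (k * (n / 2)), (countAt n k u j : ℝ) * (((j : ℝ) ^ k)⁻¹) ^ 2 := by
  rw [recipNum, ← sum_others_eq_sum_countAt u fun j => (((j : ℝ) ^ k)⁻¹) ^ 2]
  simp only [Real.rpow_neg_natCast, zpow_neg, zpow_natCast]

lemma sum_Icc_half_le_sum_Icc (hk : 1 ≤ k) {f : ℕ → ℝ} (hf : ∀ j, 0 ≤ f j) :
    ∑ j ∈ Icc 1 (n / 2), f j ≤ ∑ j ∈ Icc 1 (k * (n / 2)), f j :=
  sum_le_sum_of_subset_of_nonneg (Icc_subset_Icc_right (Nat.le_mul_of_pos_left _ hk))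
    fun j _ _ => hf j

lemma mul_log_le_cnorm (hk : 1 ≤ k) (hξm : 0 ≤ ξm) (hlow : CountLowerBound n k ξm u) :
    ξm * Real.log (n / 2 : ℕ) ≤ cnorm n k u k := by
  calc ξm * Real.log (n / 2 : ℕ) ≤ ξm * ∑ j ∈ Icc 1 (n / 2), (j : ℝ)⁻¹ := by
        gcongr; exact log_le_sum_Icc_inv _
    _ = ∑ j ∈ Icc 1 (n / 2), ξm * (j : ℝ) ^ (k - 1) * ((j : ℝ) ^ k)⁻¹ := by
        rw [mul_sum]
        refine sum_congr rfl fun j hj => ?_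
        have hj0 : (j : ℝ) ≠ 0 := by have := (mem_Icc.mp hj).1; positivity
        rw [mul_assoc, pow_sub_one_mul_inv_pow hj0 hk]
    _ ≤ ∑ j ∈ Icc 1 (n / 2), (countAt n k u j : ℝ) * ((j : ℝ) ^ k)⁻¹ :=
        sum_le_sum fun j hj => by
          gcongr; exact hlow j (mem_Icc.mp hj).1 (mem_Icc.mp hj).2
    _ ≤ cnorm n k u k := by
        rw [cnorm_natCast_eq]; exact sum_Icc_half_le_sum_Icc hk fun j => by positivity

lemma cnorm_le_mul_log (hk : 1 ≤ k) (hn : 2 ≤ n) (hξp : 0 ≤ ξp)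
    (hup : CountUpperBound n k ξp u) : cnorm n k u k ≤ ξp * Real.log (2 * k * n) := by
  set M := k * (n / 2)
  have hM : (0 : ℝ) < M := by exact_mod_cast Nat.mul_pos hk (by omega)
  have hM3 : Real.exp 1 * M ≤ 2 * k * n := by
    have h3M : ((3 * M : ℕ) : ℝ) ≤ ((2 * k * n : ℕ) : ℝ) := by
      exact_mod_cast (show 3 * (k * (n / 2)) ≤ 2 * k * n by
        nlinarith [Nat.div_mul_le_self n 2])
    push_cast at h3M
    nlinarith [Real.exp_one_lt_d9]
  calc cnorm n k u k ≤ ∑ j ∈ Icc 1 M, ξp * (j : ℝ)⁻¹ := by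
        rw [cnorm_natCast_eq]
        refine sum_le_sum fun j hj => ?_
        obtain ⟨hj1, hjM⟩ := mem_Icc.mp hj
        have hj0 : (j : ℝ) ≠ 0 := by positivity
        calc (countAt n k u j : ℝ) * ((j : ℝ) ^ k)⁻¹
            ≤ ξp * (j : ℝ) ^ (k - 1) * ((j : ℝ) ^ k)⁻¹ := by gcongr; exact hup j hj1 hjM
          _ = ξp * (j : ℝ)⁻¹ := by rw [mul_assoc, pow_sub_one_mul_inv_pow hj0 hk]
    _ ≤ ξp * (1 + Real.log M) := by rw [← mul_sum]; gcongr; exact sum_Icc_inv_le_one_add_log M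
    _ = ξp * Real.log (Real.exp 1 * M) := by
        rw [Real.log_mul (Real.exp_ne_zero 1) hM.ne', Real.log_exp]
    _ ≤ ξp * Real.log (2 * k * n) := by gcongr

lemma mul_le_linkDistNum (hk : 1 ≤ k) (hlow : CountLowerBound n k ξm u) :
    ξm * (n / 2 : ℕ) ≤ linkDistNum n k u k := by
  calc ξm * (n / 2 : ℕ) = ∑ _j ∈ Icc 1 (n / 2), ξm := by simp [mul_comm]
    _ = ∑ j ∈ Icc 1 (n / 2), ξm * (j : ℝ) ^ (k - 1) * (((j : ℝ) ^ k)⁻¹ * j) :=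
        sum_congr rfl fun j hj => by
          have hj0 : (j : ℝ) ≠ 0 := by have := (mem_Icc.mp hj).1; positivity
          rw [mul_assoc, pow_sub_one_mul_inv_pow_mul_self hj0 hk, mul_one]
    _ ≤ ∑ j ∈ Icc 1 (n / 2), (countAt n k u j : ℝ) * (((j : ℝ) ^ k)⁻¹ * j) :=
        sum_le_sum fun j hj => by
          gcongr; exact hlow j (mem_Icc.mp hj).1 (mem_Icc.mp hj).2
    _ ≤ linkDistNum n k u k := by
        rw [linkDistNum_natCast_eq]; exact sum_Icc_half_le_sum_Icc hk fun j => by positivity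

lemma linkDistNum_le (hk : 1 ≤ k) (hn : 4 * (k - 1) ^ 2 < n / 2) (hkξ : (k : ℝ) ≤ ξp)
    (hup : CountUpperBound n k ξp u) : linkDistNum n k u k ≤ 7 * ξp * (n / 2 : ℕ) := by
  set m := n / 2
  have hterm : ∀ j, 1 ≤ j → ∀ C : ℝ, (countAt n k u j : ℝ) ≤ C * (j : ℝ) ^ (k - 1) →
      (countAt n k u j : ℝ) * (((j : ℝ) ^ k)⁻¹ * j) ≤ C := fun j hj C hC => by
    have hj0 : (j : ℝ) ≠ 0 := by positivity
    calc (countAt n k u j : ℝ) * (((j : ℝ) ^ k)⁻¹ * j)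
        ≤ C * (j : ℝ) ^ (k - 1) * (((j : ℝ) ^ k)⁻¹ * j) := by gcongr
      _ = C := by rw [mul_assoc, pow_sub_one_mul_inv_pow_mul_self hj0 hk, mul_one]
  have hhead :
      ∑ j ∈ Ioc 0 m, (countAt n k u j : ℝ) * (((j : ℝ) ^ k)⁻¹ * j) ≤ ξp * m := by
    calc _ ≤ ∑ _j ∈ Ioc 0 m, ξp := sum_le_sum fun j hj => by
          obtain ⟨hj1, hjm⟩ := mem_Ioc.mp hj
          exact hterm j hj1 ξp (hup j hj1 (hjm.trans (Nat.le_mul_of_pos_left m hk)))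
      _ = ξp * m := by simp [mul_comm]
  -- bounding these `(k - 1) * m` terms by `ξp` would lose a factor `k`; the geometric bound
  -- does not
  have htail : ∑ j ∈ Ioc m (k * m), (countAt n k u j : ℝ) * (((j : ℝ) ^ k)⁻¹ * j) ≤
      6 * ((k - 1 : ℕ) * m) := by
    calc _ ≤ ∑ _j ∈ Ioc m (k * m), (6 : ℝ) := sum_le_sum fun j hj => by
          obtain ⟨hmj, -⟩ := mem_Ioc.mp hj
          exact hterm j (by omega) 6 (countAt_le_six_mul_pow u hk (by omega))
      _ = 6 * ((k - 1 : ℕ) * m) := by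
          rw [sum_const, Nat.card_Ioc, ← Nat.sub_one_mul, nsmul_eq_mul]; push_cast; ring
  have hk1 : ((k - 1 : ℕ) : ℝ) ≤ ξp := by push_cast [hk]; linarith
  rw [linkDistNum_natCast_eq, show Icc 1 (k * m) = Ioc 0 (k * m) from Icc_add_one_left_eq_Ioc 0 _,
    ← sum_Ioc_consecutive _ (Nat.zero_le m) (Nat.le_mul_of_pos_left m hk)]
  nlinarith [(Nat.cast_nonneg m : (0 : ℝ) ≤ m)]

lemma recipNum_le (hk : 1 ≤ k) (hξp : 0 ≤ ξp) (hup : CountUpperBound n k ξp u) :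
    recipNum n k u k ≤ 2 * ξp := by
  calc recipNum n k u k ≤ ∑ j ∈ Icc 1 (k * (n / 2)), ξp * ((j : ℝ) ^ 2)⁻¹ := by
        rw [recipNum_natCast_eq]
        refine sum_le_sum fun j hj => ?_
        obtain ⟨hj1, hjM⟩ := mem_Icc.mp hj
        have hj : (1 : ℝ) ≤ j := by exact_mod_cast hj1
        calc (countAt n k u j : ℝ) * (((j : ℝ) ^ k)⁻¹) ^ 2
            ≤ ξp * (j : ℝ) ^ (k - 1) * (((j : ℝ) ^ k)⁻¹ * ((j : ℝ) ^ k)⁻¹) := by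
              rw [← sq]; gcongr; exact hup j hj1 hjM
          _ = ξp * ((j : ℝ)⁻¹ * ((j : ℝ) ^ k)⁻¹) := by
              rw [mul_assoc, ← mul_assoc _ (_ ^ k)⁻¹,
                pow_sub_one_mul_inv_pow (by positivity) hk]
          _ ≤ ξp * ((j : ℝ)⁻¹ * (j : ℝ)⁻¹) := by
              gcongr; exact le_self_pow₀ hj (by omega)
          _ = ξp * ((j : ℝ) ^ 2)⁻¹ := by rw [sq, mul_inv]
    _ ≤ ξp * 2 := by rw [← mul_sum]; gcongr; exact sum_Icc_inv_sq_le_two _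
    _ = 2 * ξp := mul_comm _ _

/-- The distances `1` and `2` alone give the reciprocity numerator a margin over `ξm` that
compensates the loss in `n / 2` for odd `n`. -/
lemma mul_le_recipNum (hk : 1 ≤ k) (hn : 4 ≤ n) (hlow : CountLowerBound n k ξm u) :
    ξm * (1 + (2 ^ (k + 1) : ℝ)⁻¹) ≤ recipNum n k u k := by
  have h1 := hlow 1 le_rfl (by omega)
  have h2 := hlow 2 (by norm_num) (by omega)
  have hpow : (2 : ℝ) ^ (k - 1) * (((2 : ℝ) ^ k)⁻¹) ^ 2 = (2 ^ (k + 1) : ℝ)⁻¹ := by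
    obtain ⟨c, rfl⟩ := Nat.exists_eq_add_of_le' hk
    rw [Nat.add_sub_cancel]; field_simp; ring
  simp only [Nat.cast_one, one_pow, mul_one, Nat.cast_ofNat] at h1 h2
  calc ξm * (1 + (2 ^ (k + 1) : ℝ)⁻¹)
      = ξm + ξm * (2 : ℝ) ^ (k - 1) * (((2 : ℝ) ^ k)⁻¹) ^ 2 := by
        rw [mul_assoc, hpow]; ring
    _ ≤ (countAt n k u 1 : ℝ) * ((((1 : ℕ) : ℝ) ^ k)⁻¹) ^ 2 +
          (countAt n k u 2 : ℝ) * ((((2 : ℕ) : ℝ) ^ k)⁻¹) ^ 2 := by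
        simp only [Nat.cast_one, one_pow, inv_one, one_pow, mul_one, Nat.cast_ofNat]
        gcongr
    _ = ∑ j ∈ {1, 2}, (countAt n k u j : ℝ) * (((j : ℝ) ^ k)⁻¹) ^ 2 := by simp
    _ ≤ recipNum n k u k := by
        rw [recipNum_natCast_eq]
        refine sum_le_sum_of_subset_of_nonneg (fun j hj => ?_) fun j _ _ => by positivity
        have : 2 ≤ k * (n / 2) := le_mul_of_one_le_of_le hk (by omega)
        simp only [mem_insert, mem_singleton] at hj
        rcases hj with rfl | rfl <;> simp <;> omega

lemma le_payoff_navigable (hk : 1 ≤ k) (hξm : 0 < ξm) (hξp : 0 < ξp) (hn : 2 ^ (k + 1) < n)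
    (hn4 : 4 ≤ n) (hlow : ∀ w, CountLowerBound n k ξm w)
    (hup : ∀ w, CountUpperBound n k ξp w) (u : Node n k) :
    ξm ^ 2 / (2 * ξp ^ 3) * ((n : ℝ) / (Real.log (2 * k * n)) ^ 3) ≤
      payoff n k (fun _ => (k : ℝ)) u := by
  have hcL w : 0 < cnorm n k w k :=
    (mul_pos hξm (Real.log_pos (by exact_mod_cast (show 1 < n / 2 by omega)))).trans_le
      (mul_log_le_cnorm hk hξm.le (hlow w))
  have hLQ : 0 < Real.log (2 * k * n) :=
    Real.log_pos (by exact_mod_cast (show 1 < 2 * k * n by nlinarith))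
  have := mul_le_linkDistNum hk (hlow u)
  have := mul_le_recipNum hk hn4 (hlow u)
  calc ξm ^ 2 / (2 * ξp ^ 3) * ((n : ℝ) / (Real.log (2 * k * n)) ^ 3)
      = ξm ^ 2 / ξp ^ 3 * ((n : ℝ) / 2 / Real.log (2 * k * n) ^ 3) := by ring
    _ ≤ ξm ^ 2 / ξp ^ 3 *
          ((n / 2 : ℕ) * (1 + (2 ^ (k + 1) : ℝ)⁻¹) / Real.log (2 * k * n) ^ 3) := by
        gcongr; exact half_le_mul_one_add_inv_two_pow hn
    _ = ξm * (n / 2 : ℕ) * (ξm * (1 + (2 ^ (k + 1) : ℝ)⁻¹)) /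
          (ξp * Real.log (2 * k * n)) ^ 3 := by ring
    _ ≤ linkDistNum n k u k * recipNum n k u k / (ξp * Real.log (2 * k * n)) ^ 3 := by
        have := linkDistNum_nonneg u k
        gcongr
    _ ≤ payoff n k (fun _ => (k : ℝ)) u :=
        le_payoff_const hcL (fun w => cnorm_le_mul_log hk (by omega) hξp.le (hup w)) u

lemma payoff_navigable_le (hk : 1 ≤ k) (hξm : 0 < ξm) (hkξ : (k : ℝ) ≤ ξp)
    (hn : 243 ≤ n) (hnk : 4 * (k - 1) ^ 2 < n / 2) (hlow : ∀ w, CountLowerBound n k ξm w)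
    (hup : ∀ w, CountUpperBound n k ξp w) (u : Node n k) :
    payoff n k (fun _ => (k : ℝ)) u ≤
      16 * ξp ^ 2 / ξm ^ 3 * ((n : ℝ) / (Real.log n) ^ 3) := by
  have hcL : 0 < ξm * Real.log (n / 2 : ℕ) :=
    mul_pos hξm (Real.log_pos (by exact_mod_cast (show 1 < n / 2 by omega)))
  have hξp : 0 ≤ ξp := by linarith [(Nat.one_le_cast.mpr hk : (1 : ℝ) ≤ k)]
  have := linkDistNum_le hk hnk hkξ (hup u)
  have := recipNum_le hk hξp (hup u)
  have := recipNum_nonneg u k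
  calc payoff n k (fun _ => (k : ℝ)) u
      ≤ linkDistNum n k u k * recipNum n k u k / (ξm * Real.log (n / 2 : ℕ)) ^ 3 :=
        payoff_const_le hcL (fun w => mul_log_le_cnorm hk hξm.le (hlow w)) u
    _ ≤ 7 * ξp * (n / 2 : ℕ) * (2 * ξp) / (ξm * Real.log (n / 2 : ℕ)) ^ 3 := by gcongr
    _ = ξp ^ 2 / ξm ^ 3 * (14 * (n / 2 : ℕ) / Real.log (n / 2 : ℕ) ^ 3) := by ring
    _ ≤ ξp ^ 2 / ξm ^ 3 * (16 * n / Real.log n ^ 3) :=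
        mul_le_mul_of_nonneg_left (div_log_half_cube_le hn) (by positivity)
    _ = 16 * ξp ^ 2 / ξm ^ 3 * ((n : ℝ) / (Real.log n) ^ 3) := by ring

end Navigable

end DRB

open DRB

theorem navigable_payoff_bounds_general (k : ℕ) (hk : 1 ≤ k)
    (ξm ξp : ℝ) (hξm : 0 < ξm)
    (hb1 : ∀ n : ℕ, ∀ u : DRB.Node n k, ∀ j : ℕ, 1 ≤ j → j ≤ n / 2 →
      ξm * (j : ℝ) ^ (k - 1) ≤ (DRB.countAt n k u j : ℝ) ∧
        (DRB.countAt n k u j : ℝ) ≤ ξp * (j : ℝ) ^ (k - 1))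
    (hb2 : ∀ n : ℕ, ∀ u : DRB.Node n k, ∀ j : ℕ, n / 2 < j → j ≤ k * (n / 2) →
      1 ≤ DRB.countAt n k u j ∧
        (DRB.countAt n k u j : ℝ) ≤ ξp * (j : ℝ) ^ (k - 1)) :
    ∃ n0 : ℕ, ∀ n : ℕ, n0 ≤ n → ∀ u : DRB.Node n k,
      ξm ^ 2 / (2 * ξp ^ 3) * ((n : ℝ) / (Real.log (2 * k * n)) ^ 3) ≤
        DRB.payoff n k (fun _ => (k : ℝ)) u ∧
      DRB.payoff n k (fun _ => (k : ℝ)) u ≤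
        16 * ξp ^ 2 / ξm ^ 3 * ((n : ℝ) / (Real.log n) ^ 3) := by
  -- on the torus of side `2` the `k` coordinate flips of a node are at distance `1`
  have hkξ : (k : ℝ) ≤ ξp := by
    have h := (hb1 2 (fun _ => 0) 1 le_rfl le_rfl).2
    rw [Nat.cast_one, one_pow, mul_one] at h
    exact (Nat.cast_le.mpr (k_le_countAt_two_one _)).trans h
  have hξp : 0 < ξp := by linarith [(Nat.one_le_cast.mpr hk : (1 : ℝ) ≤ k)]
  refine ⟨2 ^ (k + 1) + 8 * k ^ 2 + 243, fun n hn u => ?_⟩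
  have := Nat.one_le_two_pow (n := k + 1)
  have : (k - 1) ^ 2 ≤ k ^ 2 := Nat.pow_le_pow_left (Nat.sub_le k 1) 2
  have hlow : ∀ w, CountLowerBound n k ξm w := fun w j hj hjm => (hb1 n w j hj hjm).1
  have hup : ∀ w, CountUpperBound n k ξp w := fun w j hj hjM =>
    (le_or_gt j (n / 2)).elim (fun hjm => (hb1 n w j hj hjm).2) (fun hjm => (hb2 n w j hjm hjM).2)
  exact ⟨le_payoff_navigable hk hξm hξp (by omega) (by omega) hlow hup u,
    payoff_navigable_le hk hξm hkξ (by omega) (by omega) hlow hup u⟩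

/-- Payoff bounds in the navigable equilibrium. With the counting
constants `ξ_k^-, ξ_k^+`, for sufficiently large `n`, every node `u` in the
navigable profile `r ≡ k` satisfies
`((ξ_k^-)^2/(2(ξ_k^+)^3))·n/(ln(2kn))^3 ≤ π_u ≤ (16(ξ_k^+)^2/(ξ_k^-)^3)·n/(ln n)^3`. -/
theorem navigable_payoff_bounds (k g : ℕ) (hk : 1 ≤ k) (hg : 2 ≤ g)
    (ξm ξp : ℝ) (hξm : 0 < ξm) (hξp : 0 < ξp)
    (hb1 : ∀ n : ℕ, ∀ u : DRB.Node n k, ∀ j : ℕ, 1 ≤ j → j ≤ n / 2 →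
      ξm * (j : ℝ) ^ (k - 1) ≤ (DRB.countAt n k u j : ℝ) ∧
        (DRB.countAt n k u j : ℝ) ≤ ξp * (j : ℝ) ^ (k - 1))
    (hb2 : ∀ n : ℕ, ∀ u : DRB.Node n k, ∀ j : ℕ, n / 2 < j → j ≤ k * (n / 2) →
      1 ≤ DRB.countAt n k u j ∧
        (DRB.countAt n k u j : ℝ) ≤ ξp * (j : ℝ) ^ (k - 1)) :
    ∃ n0 : ℕ, ∀ n : ℕ, n0 ≤ n → ∀ u : DRB.Node n k,
      ξm ^ 2 / (2 * ξp ^ 3) * ((n : ℝ) / (Real.log (2 * k * n)) ^ 3) ≤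
        DRB.payoff n k (fun _ => (k : ℝ)) u ∧
      DRB.payoff n k (fun _ => (k : ℝ)) u ≤
        16 * ξp ^ 2 / ξm ^ 3 * ((n : ℝ) / (Real.log n) ^ 3) :=
  navigable_payoff_bounds_general k hk ξm ξp hξm hb1 hb2
end
end

section
/- In the k-dimensional grid with k > 1, suppose ξ_k^− is a positive constant depending only on k such that b_u(j) ≥ ξ_k^− j^{k−1} for all 1 ≤ j ≤ ⌊n/2⌋, where b_u(j) is the number of nodes at grid distance exactly j from u. Let η > 0, let S ⊆ Σ be a finite set, and suppose each node independently chooses a strategy from S with the probability of each s ∈ S being at least η. Let ρ = ((24+8k)/ξ_k^−)^{1/(k−1)} and let Y_u(j,s) denote the (random) number of nodes at grid distance exactly j from u that chose strategy s. Then for all n ≥ |S|, with probability at least 1 − 1/n it holds that Y_u(j,s) > η·b_u(j)/2 for every node u ∈ V, every s ∈ S, and every integer j with ρ·(ln n/η)^{1/(k−1)} ≤ j ≤ n/2. -/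
open Finset

noncomputable section

/-! For fixed `u`, `s` and a level `j`, the number of nodes at distance `j` from `u` that choose `s`
is a sum of `b_u(j)` independent Bernoulli variables of mean at least `η`. Chernoff's bound with
tilt `exp (-log 2)` bounds the probability that it is at most `η b_u(j) / 2` by
`exp (-(1 - log 2) η b_u(j) / 2)`, and above the threshold `ρ (log n / η) ^ (1 / (k - 1))` the
lower bound `b_u(j) ≥ ξ j ^ (k - 1)` gives `η b_u(j) ≥ (24 + 8k) log n`, so this is at most
`n ^ -(k + 3)`. A union bound over the at most `n ^ (k + 2)` triples `(u, s, j)` loses at most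
`1 / n`. -/

open Real

lemma mul_le_of_threshold_le {k j : ℕ} (hk : 1 < k) {ξ c L b : ℝ} (hξ : 0 < ξ) (hc : 0 < c)
    (hL : 0 < L) (hj : (c / ξ) ^ (1 / ((k : ℝ) - 1)) * L ^ (1 / ((k : ℝ) - 1)) ≤ j)
    (hb : 1 ≤ j → ξ * (j : ℝ) ^ (k - 1) ≤ b) : c * L ≤ b := by
  have hd : (k : ℝ) - 1 = ((k - 1 : ℕ) : ℝ) := by
    rw [Nat.cast_sub hk.le, Nat.cast_one]
  have hx : 0 < c / ξ * L := by positivity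
  rw [← mul_rpow (by positivity) hL.le, one_div, hd] at hj
  have hjx : c / ξ * L ≤ (j : ℝ) ^ (k - 1) :=
    calc c / ξ * L = ((c / ξ * L) ^ ((k - 1 : ℕ) : ℝ)⁻¹) ^ (k - 1) :=
          (rpow_inv_natCast_pow hx.le (by omega)).symm
      _ ≤ (j : ℝ) ^ (k - 1) := by gcongr
  have hj1 : 1 ≤ j := by
    have : (0 : ℝ) < j := (rpow_pos_of_pos hx _).trans_le hj
    exact_mod_cast this
  calc c * L = ξ * (c / ξ * L) := by field_simp
    _ ≤ ξ * (j : ℝ) ^ (k - 1) := by gcongr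
    _ ≤ b := hb hj1

lemma exp_neg_le_inv_pow_of_mul_log_le {n k : ℕ} (hn : 0 < n) {x : ℝ}
    (hx : (24 + 8 * k) * log n ≤ x) : exp (-((1 - log 2) / 2 * x)) ≤ ((n : ℝ) ^ (k + 3))⁻¹ := by
  have hlog : 0 ≤ log n := log_natCast_nonneg n
  rw [← exp_log (by positivity : (0 : ℝ) < n ^ (k + 3)), ← exp_neg, log_pow, exp_le_exp]
  push_cast
  -- `(1 - log 2) (12 + 4k) ≥ k + 3` as `log 2 < 0.7`
  nlinarith [log_two_lt_d9, mul_nonneg (Nat.cast_nonneg (α := ℝ) k) hlog]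

lemma card_univ_product_univ_product_le {β : Type*} [Fintype β] {n k : ℕ} {J : Finset ℕ}
    (hβ : Fintype.card β ≤ n) (hJ : #J ≤ n) :
    #((univ : Finset (Fin k → Fin n)) ×ˢ (univ : Finset β) ×ˢ J) ≤ n ^ (k + 2) := by
  simp only [card_product, card_univ, Fintype.card_fun, Fintype.card_fin]
  calc n ^ k * (Fintype.card β * #J) ≤ n ^ k * (n * n) := by gcongr
    _ = n ^ (k + 2) := by ring

section PiMass

variable {V α : Type*} [Fintype V] (q : α → ℝ)

/-- The probability of `E` when the values `σ u` are drawn independently with law `q`. -/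
def piMass (E : Finset (V → α)) : ℝ :=
  ∑ σ ∈ E, ∏ u, q (σ u)

variable {q}

lemma piMass_nonneg (hq0 : ∀ a, 0 ≤ q a) (E : Finset (V → α)) : 0 ≤ piMass q E :=
  sum_nonneg fun σ _ => prod_nonneg fun u _ => hq0 (σ u)

lemma piMass_mono (hq0 : ∀ a, 0 ≤ q a) {E F : Finset (V → α)} (h : E ⊆ F) :
    piMass q E ≤ piMass q F :=
  sum_le_sum_of_subset_of_nonneg h fun σ _ _ => prod_nonneg fun u _ => hq0 (σ u)

lemma piMass_univ [DecidableEq V] [Fintype α] (hq1 : ∑ a, q a = 1) :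
    piMass q (univ : Finset (V → α)) = 1 := by
  rw [piMass, ← Fintype.prod_sum (fun _ a => q a), hq1, prod_const_one]

lemma piMass_compl [DecidableEq V] [Fintype α] [DecidableEq α] (hq1 : ∑ a, q a = 1)
    (E : Finset (V → α)) : piMass q Eᶜ = 1 - piMass q E := by
  rw [← piMass_univ (V := V) hq1, piMass, piMass, piMass, ← sum_compl_add_sum E]
  ring

lemma piMass_union_le [DecidableEq V] [DecidableEq α] (hq0 : ∀ a, 0 ≤ q a)
    (E F : Finset (V → α)) : piMass q (E ∪ F) ≤ piMass q E + piMass q F := by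
  have h := sum_union_inter (s₁ := E) (s₂ := F) (f := fun σ => ∏ u, q (σ u))
  have h0 := piMass_nonneg hq0 (E ∩ F)
  unfold piMass at *
  linarith

lemma piMass_biUnion_le [DecidableEq V] [DecidableEq α] {ι : Type*} [DecidableEq ι]
    (hq0 : ∀ a, 0 ≤ q a) (T : Finset ι) (E : ι → Finset (V → α)) :
    piMass q (T.biUnion E) ≤ ∑ t ∈ T, piMass q (E t) := by
  induction T using Finset.induction_on with
  | empty => simp [piMass]
  | insert t T ht ih =>
    rw [biUnion_insert, sum_insert ht]
    exact (piMass_union_le hq0 _ _).trans (by gcongr)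

lemma one_sub_card_mul_le_piMass_filter [DecidableEq V] [Fintype α] [DecidableEq α]
    {ι : Type*} [DecidableEq ι] (hq0 : ∀ a, 0 ≤ q a) (hq1 : ∑ a, q a = 1) {T : Finset ι}
    {E : ι → Finset (V → α)} {ε : ℝ} (hE : ∀ t ∈ T, piMass q (E t) ≤ ε)
    {P : (V → α) → Prop} [DecidablePred P] (hP : ∀ σ, (∀ t ∈ T, σ ∉ E t) → P σ) :
    1 - #T * ε ≤ piMass q (univ.filter P) := by
  have hsum : ∑ t ∈ T, piMass q (E t) ≤ #T * ε := by
    simpa using sum_le_sum hE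
  have hsub : (T.biUnion E)ᶜ ⊆ univ.filter P := fun σ hσ => by
    simp only [mem_compl, mem_biUnion, not_exists, not_and] at hσ
    exact mem_filter.mpr ⟨mem_univ σ, hP σ hσ⟩
  have := piMass_mono hq0 hsub
  rw [piMass_compl hq1] at this
  linarith [piMass_biUnion_le hq0 T E]

end PiMass

section Chernoff

variable {V α : Type*} [Fintype V] [DecidableEq V] [Fintype α] [DecidableEq α] {q : α → ℝ}

/-- The generating function `E[c ^ Y]` of `Y σ = #{v ∈ B | σ v = a}`. -/
lemma sum_prod_mul_pow_card_filter (hq1 : ∑ a, q a = 1) (B : Finset V) (a : α) (c : ℝ) :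
    ∑ σ : V → α, (∏ u, q (σ u)) * c ^ #(B.filter fun v => σ v = a) =
      (1 - (1 - c) * q a) ^ #B := by
  set g : V → α → ℝ := fun u x => q x * if u ∈ B ∧ x = a then c else 1 with hg
  have hg_prod (σ : V → α) :
      (∏ u, q (σ u)) * c ^ #(B.filter fun v => σ v = a) = ∏ u, g u (σ u) := by
    simp only [hg, prod_mul_distrib, prod_ite, prod_const]
    rw [one_pow, mul_one, ← filter_filter, filter_mem_eq_inter, univ_inter]
  have hg_sum (u : V) : ∑ x, g u x = if u ∈ B then 1 - (1 - c) * q a else 1 := by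
    split_ifs with hu
    · have hsplit (x : α) : g u x = q x - if x = a then (1 - c) * q x else 0 := by
        simp only [hg, hu, true_and]
        split_ifs <;> ring
      simp only [hsplit, sum_sub_distrib, hq1, sum_ite_eq', mem_univ, if_true]
    · simp only [hg, hu, false_and, if_false, mul_one, hq1]
  simp_rw [hg_prod, ← Fintype.prod_sum g, hg_sum]
  rw [prod_ite_mem, univ_inter, prod_const]

/-- Chernoff's bound for the lower tail of `Y σ = #{v ∈ B | σ v = a}`, obtained from Markov's
inequality for `exp (-t * Y)`. -/
lemma piMass_card_filter_le_le_exp (hq0 : ∀ a, 0 ≤ q a) (hq1 : ∑ a, q a = 1)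
    (B : Finset V) (a : α) {t : ℝ} (ht : 0 ≤ t) (m : ℝ) :
    piMass q (univ.filter fun σ : V → α => (#(B.filter fun v => σ v = a) : ℝ) ≤ m) ≤
      exp (t * m - (1 - exp (-t)) * q a * #B) := by
  set Y : (V → α) → ℕ := fun σ => #(B.filter fun v => σ v = a)
  have hterm (σ : V → α) : 0 ≤ exp (t * m) * ((∏ u, q (σ u)) * exp (-t) ^ Y σ) :=
    mul_nonneg (exp_nonneg _) (mul_nonneg (prod_nonneg fun u _ => hq0 (σ u)) (by positivity))
  have hmarkov : ∀ σ ∈ univ.filter fun σ => (Y σ : ℝ) ≤ m,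
      ∏ u, q (σ u) ≤ exp (t * m) * ((∏ u, q (σ u)) * exp (-t) ^ Y σ) := by
    intro σ hσ
    have h1 : 1 ≤ exp (t * m) * exp (-t) ^ Y σ := by
      rw [← exp_nat_mul, ← exp_add, one_le_exp_iff]
      nlinarith [(mem_filter.mp hσ).2]
    rw [mul_left_comm]
    exact le_mul_of_one_le_right (prod_nonneg fun u _ => hq0 (σ u)) h1
  have hqa : q a ≤ 1 := hq1 ▸ single_le_sum (fun x _ => hq0 x) (mem_univ a)
  have hbase : 0 ≤ 1 - (1 - exp (-t)) * q a := by
    nlinarith [exp_pos (-t), hq0 a]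
  calc piMass q _ ≤ ∑ σ ∈ univ.filter fun σ => (Y σ : ℝ) ≤ m,
        exp (t * m) * ((∏ u, q (σ u)) * exp (-t) ^ Y σ) := sum_le_sum hmarkov
    _ ≤ ∑ σ : V → α, exp (t * m) * ((∏ u, q (σ u)) * exp (-t) ^ Y σ) :=
        sum_le_sum_of_subset_of_nonneg (filter_subset _ _) fun σ _ _ => hterm σ
    _ = exp (t * m) * (1 - (1 - exp (-t)) * q a) ^ #B := by
        rw [← mul_sum, sum_prod_mul_pow_card_filter hq1]
    _ ≤ exp (t * m) * exp (-((1 - exp (-t)) * q a)) ^ #B := by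
        gcongr
        linarith [add_one_le_exp (-((1 - exp (-t)) * q a))]
    _ = exp (t * m - (1 - exp (-t)) * q a * #B) := by
        rw [← exp_nat_mul, ← exp_add]
        ring_nf

lemma piMass_card_filter_le_half_le_exp (hq0 : ∀ a, 0 ≤ q a) (hq1 : ∑ a, q a = 1)
    (B : Finset V) (a : α) {η : ℝ} (hηa : η ≤ q a) :
    piMass q (univ.filter fun σ : V → α => (#(B.filter fun v => σ v = a) : ℝ) ≤ η * #B / 2) ≤
      exp (-((1 - log 2) / 2 * (η * #B))) := by
  refine (piMass_card_filter_le_le_exp hq0 hq1 B a (log_nonneg one_le_two) _).trans ?_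
  rw [exp_neg, exp_log two_pos]
  gcongr
  nlinarith [mul_le_mul_of_nonneg_right hηa (Nat.cast_nonneg (α := ℝ) #B)]

lemma piMass_card_filter_le_half_le_inv_pow (hq0 : ∀ a, 0 ≤ q a) (hq1 : ∑ a, q a = 1)
    {n k j : ℕ} (hk : 1 < k) (hn : 2 ≤ n) {ξ η : ℝ} (hξ : 0 < ξ) (hη : 0 < η)
    (B : Finset V) (a : α) (hηa : η ≤ q a)
    (hj : ((24 + 8 * (k : ℝ)) / ξ) ^ ((1 : ℝ) / ((k : ℝ) - 1)) *
      (log n / η) ^ ((1 : ℝ) / ((k : ℝ) - 1)) ≤ j)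
    (hB : 1 ≤ j → ξ * (j : ℝ) ^ (k - 1) ≤ #B) :
    piMass q (univ.filter fun σ : V → α => (#(B.filter fun v => σ v = a) : ℝ) ≤ η * #B / 2) ≤
      ((n : ℝ) ^ (k + 3))⁻¹ := by
  have hlevel : (24 + 8 * k) * log n ≤ η * #B := by
    have := mul_le_of_threshold_le hk hξ (by positivity)
      (div_pos (log_pos (by exact_mod_cast hn)) hη) hj hB
    rwa [← mul_div_assoc, div_le_iff₀' hη] at this
  exact (piMass_card_filter_le_half_le_exp hq0 hq1 B a hηa).trans
    (exp_neg_le_inv_pow_of_mul_log_le (by omega) hlevel)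

end Chernoff

open Classical in
theorem chernoff_density_general (k : ℕ) (hk : 1 < k)
    (ξm : ℝ) (hξm : 0 < ξm) (n : ℕ)
    (hb : ∀ u : DRB.Node n k, ∀ j : ℕ, 1 ≤ j → j ≤ n / 2 →
      ξm * (j : ℝ) ^ (k - 1) ≤ (DRB.countAt n k u j : ℝ))
    (η : ℝ) (hη : 0 < η) (S : Finset ℝ)
    (p : ℝ → ℝ) (hp : ∀ s ∈ S, η ≤ p s) (hsum : ∑ s ∈ S, p s = 1)
    (hn : S.card ≤ n) :
    1 - 1 / (n : ℝ) ≤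
      ∑ σ ∈ Finset.univ.filter (fun σ : DRB.Node n k → {x : ℝ // x ∈ S} =>
          ∀ u : DRB.Node n k, ∀ s ∈ S, ∀ j : ℕ,
            ((24 + 8 * (k : ℝ)) / ξm) ^ ((1 : ℝ) / ((k : ℝ) - 1)) *
                (Real.log n / η) ^ ((1 : ℝ) / ((k : ℝ) - 1)) ≤ (j : ℝ) →
            (j : ℝ) ≤ (n : ℝ) / 2 →
            η * (DRB.countAt n k u j : ℝ) / 2 <
              ((Finset.univ.filter (fun v : DRB.Node n k =>
                  v ≠ u ∧ DRB.dM n k u v = j ∧ (σ v : ℝ) = s)).card : ℝ)),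
        ∏ u, p (σ u) := by
  set q : S → ℝ := fun s => p s
  have hq0 (a : S) : 0 ≤ q a := hη.le.trans (hp a a.2)
  have hq1 : ∑ a, q a = 1 := (sum_coe_sort S p).trans hsum
  obtain hn2 | hn2 := lt_or_ge n 2
  · have hS : S.Nonempty := nonempty_of_sum_ne_zero (hsum ▸ one_ne_zero)
    obtain rfl : n = 1 := by have := hS.card_pos; omega
    rw [Nat.cast_one, div_one, sub_self]
    exact piMass_nonneg hq0 _
  set ρ := ((24 + 8 * (k : ℝ)) / ξm) ^ ((1 : ℝ) / ((k : ℝ) - 1)) *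
    (log n / η) ^ ((1 : ℝ) / ((k : ℝ) - 1))
  set B : DRB.Node n k → ℕ → Finset (DRB.Node n k) := fun u j =>
    univ.filter fun v => v ≠ u ∧ DRB.dM n k u v = j
  set T : Finset (DRB.Node n k × S × ℕ) :=
    univ ×ˢ univ ×ˢ (range (n / 2 + 1)).filter fun j : ℕ => ρ ≤ (j : ℝ)
  set Bad : DRB.Node n k × S × ℕ → Finset (DRB.Node n k → S) := fun t =>
    univ.filter fun σ =>
      (#((B t.1 t.2.2).filter fun v => σ v = t.2.1) : ℝ) ≤ η * #(B t.1 t.2.2) / 2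
  have hBad : ∀ t ∈ T, piMass q (Bad t) ≤ ((n : ℝ) ^ (k + 3))⁻¹ := by
    rintro ⟨u, a, j⟩ ht
    simp only [T, mem_product, mem_filter, mem_range, mem_univ, true_and] at ht
    exact piMass_card_filter_le_half_le_inv_pow hq0 hq1 hk hn2 hξm hη _ a (hp a a.2) ht.2
      fun hj1 => hb u j hj1 (by omega)
  have hT : #T ≤ n ^ (k + 2) := card_univ_product_univ_product_le (by simpa using hn)
    ((card_filter_le _ _).trans (by rw [card_range]; omega))
  calc 1 - 1 / (n : ℝ) = 1 - (n : ℝ) ^ (k + 2) * ((n : ℝ) ^ (k + 3))⁻¹ := by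
        field_simp
        ring
    _ ≤ 1 - #T * ((n : ℝ) ^ (k + 3))⁻¹ := by gcongr; exact_mod_cast hT
    _ ≤ _ := one_sub_card_mul_le_piMass_filter hq0 hq1 hBad fun σ hσ u s hs j hj hjn => ?_
  by_contra! hle
  refine hσ (u, ⟨s, hs⟩, j) ?_ ?_
  · have : j * 2 ≤ n := by exact_mod_cast (le_div_iff₀ two_pos).mp hjn
    simp only [T, mem_product, mem_filter, mem_range, mem_univ, true_and]
    exact ⟨by omega, hj⟩
  · simp only [Bad, B, mem_filter, mem_univ, true_and, filter_filter, Subtype.ext_iff, and_assoc]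
    exact hle

open Classical in
/-- Chernoff-type density lemma, `k > 1`: if each node
independently chooses a strategy from the finite set `S`, each `s ∈ S` with
probability at least `η > 0`, then for `n ≥ |S|`, with probability at least
`1 - 1/n`, every node `u`, every `s ∈ S`, and every distance level `j` with
`ρ·(ln n/η)^{1/(k-1)} ≤ j ≤ n/2` has more than `η·b_u(j)/2` nodes at distance
exactly `j` from `u` that chose `s`, where `ρ = ((24+8k)/ξ_k^-)^{1/(k-1)}`. -/
theorem chernoff_density (k g : ℕ) (hk : 1 < k) (hg : 2 ≤ g)
    (ξm : ℝ) (hξm : 0 < ξm) (n : ℕ)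
    (hb : ∀ u : DRB.Node n k, ∀ j : ℕ, 1 ≤ j → j ≤ n / 2 →
      ξm * (j : ℝ) ^ (k - 1) ≤ (DRB.countAt n k u j : ℝ))
    (η : ℝ) (hη : 0 < η) (S : Finset ℝ)
    (hSsig : ∀ s ∈ S, DRB.InSigma (g : ℝ)⁻¹ s)
    (p : ℝ → ℝ) (hp : ∀ s ∈ S, η ≤ p s) (hsum : ∑ s ∈ S, p s = 1)
    (hn : S.card ≤ n) :
    1 - 1 / (n : ℝ) ≤
      ∑ σ ∈ Finset.univ.filter (fun σ : DRB.Node n k → {x : ℝ // x ∈ S} =>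
          ∀ u : DRB.Node n k, ∀ s ∈ S, ∀ j : ℕ,
            ((24 + 8 * (k : ℝ)) / ξm) ^ ((1 : ℝ) / ((k : ℝ) - 1)) *
                (Real.log n / η) ^ ((1 : ℝ) / ((k : ℝ) - 1)) ≤ (j : ℝ) →
            (j : ℝ) ≤ (n : ℝ) / 2 →
            η * (DRB.countAt n k u j : ℝ) / 2 <
              ((Finset.univ.filter (fun v : DRB.Node n k =>
                  v ≠ u ∧ DRB.dM n k u v = j ∧ (σ v : ℝ) = s)).card : ℝ)),
        ∏ u, p (σ u) :=
  chernoff_density_general k hk ξm hξm n hb η hη S p hp hsum hn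
end
end
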